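/- arXiv:1503.03428 — 3 statements merged into one kernel-verified Lean document; each statement's English description precedes it below -/
import Mathlib

section
/- The middle-thirds Cantor set C ⊂ ℝ is uniformly 1/5-porous; in fact, for every closed interval B(x,r) ⊂ ℝ (of any radius r > 0) there exists y such that the open interval B°(y, r/5) is contained in B(x,r) and is disjoint from C. -/
/-!
A window `[x - r, x + r]` with `r ≥ 5/6` sticks out of `[0, 1]` by at least `3r/5 ≥ 1/2` on one
side, which leaves room for a pore of radius `r/5`. A smaller window either meets both sides of
the middle gap `(1/3, 2/3)`, which then contains `B°(1/2, r/5)` since `r/5 < 1/6`, or lies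
within one of the two halves, where the map `z ↦ 3z` or `z ↦ 3z - 2` carries the Cantor set
into itself and the window to one three times larger. Induction on the number of such blow-ups
needed to reach radius `5/6` finishes the proof.
-/

/-- `E` is uniformly `β`-porous: there is `r₀ > 0` such that every closed ball of radius
`0 < r ≤ r₀` contains an open ball of radius `β r` disjoint from `E`. -/
def UniformlyPorous {X : Type*} [MetricSpace X] (β : ℝ) (E : Set X) : Prop :=
  ∃ r₀ : ℝ, 0 < r₀ ∧ ∀ (x : X) (r : ℝ), 0 < r → r ≤ r₀ →
    ∃ y : X, Metric.ball y (β * r) ⊆ Metric.closedBall x r ∧ Metric.ball y (β * r) ∩ E = ∅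

open Metric Set

section Pores

variable {X Y : Type*} [MetricSpace X] [MetricSpace Y]

def HasPore (β : ℝ) (E : Set X) (x : X) (r : ℝ) : Prop :=
  ∃ y, ball y (β * r) ⊆ closedBall x r ∧ ball y (β * r) ∩ E = ∅

theorem HasPore.mono {β r : ℝ} {E F : Set X} {x : X} (h : HasPore β F x r)
    (hEF : E ∩ closedBall x r ⊆ F) : HasPore β E x r := by
  obtain ⟨y, hsub, hdisj⟩ := h
  refine ⟨y, hsub, eq_empty_of_subset_empty fun z ⟨hz, hzE⟩ => ?_⟩
  exact hdisj.subset ⟨hz, hEF ⟨hzE, hsub hz⟩⟩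

theorem HasPore.preimage_of_dist_eq {β r a : ℝ} {E : Set Y} {f : X → Y} {x : X}
    (ha : 0 < a) (hf : ∀ u v, dist (f u) (f v) = a * dist u v) (hsurj : Function.Surjective f)
    (h : HasPore β E (f x) (a * r)) : HasPore β (f ⁻¹' E) x r := by
  obtain ⟨y', hsub, hdisj⟩ := h
  obtain ⟨y, rfl⟩ := hsurj y'
  have hball : ∀ z ∈ ball y (β * r), f z ∈ ball (f y) (β * (a * r)) := fun z hz => by
    rw [mem_ball, hf, mul_left_comm]
    exact mul_lt_mul_of_pos_left hz ha
  refine ⟨y, fun z hz => ?_, eq_empty_of_subset_empty fun z ⟨hz, hzE⟩ => ?_⟩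
  · have hfz := hsub (hball z hz)
    rw [mem_closedBall, hf] at hfz
    exact le_of_mul_le_mul_left hfz ha
  · exact hdisj.subset ⟨hball z hz, hzE⟩

end Pores

theorem HasPore.preimage_mul_add {β r a b x : ℝ} {E : Set ℝ} (ha : 0 < a)
    (h : HasPore β E (a * x + b) (a * r)) : HasPore β ((fun z => a * z + b) ⁻¹' E) x r := by
  refine h.preimage_of_dist_eq ha (fun u v => ?_) fun t => ⟨(t - b) / a, ?_⟩
  · rw [Real.dist_eq, Real.dist_eq, add_sub_add_right_eq_sub, ← mul_sub, abs_mul, abs_of_pos ha]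
  · field_simp
    ring

theorem hasPore_of_subset_unitInterval {E : Set ℝ} {x r : ℝ} (hE : E ⊆ Icc 0 1)
    (hr : 5 / 6 ≤ r) : HasPore (1 / 5) E x r := by
  rcases le_or_gt x (1 / 2) with hx | hx
  · refine ⟨x - 4 * r / 5, fun z hz => ?_, eq_empty_of_subset_empty fun z ⟨hz, hzE⟩ => ?_⟩
    all_goals rw [Real.ball_eq_Ioo] at hz; obtain ⟨hz₁, hz₂⟩ := hz
    · rw [Real.closedBall_eq_Icc]; constructor <;> linarith
    · linarith [(hE hzE).1]
  · refine ⟨x + 4 * r / 5, fun z hz => ?_, eq_empty_of_subset_empty fun z ⟨hz, hzE⟩ => ?_⟩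
    all_goals rw [Real.ball_eq_Ioo] at hz; obtain ⟨hz₁, hz₂⟩ := hz
    · rw [Real.closedBall_eq_Icc]; constructor <;> linarith
    · linarith [(hE hzE).2]

theorem mem_cantorSet_thirds {z : ℝ} (hz : z ∈ cantorSet) :
    z ≤ 1 / 3 ∧ 3 * z ∈ cantorSet ∨ 2 / 3 ≤ z ∧ 3 * z - 2 ∈ cantorSet := by
  rw [cantorSet_eq_union_halves] at hz
  rcases hz with ⟨w, hw, rfl⟩ | ⟨w, hw, rfl⟩
  · left
    refine ⟨by linarith [(cantorSet_subset_unitInterval hw).2], ?_⟩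
    rwa [mul_div_cancel₀ w three_ne_zero]
  · right
    refine ⟨by linarith [(cantorSet_subset_unitInterval hw).1], ?_⟩
    rwa [mul_div_cancel₀ _ three_ne_zero, add_sub_cancel_left]

theorem cantorSet_inter_Iio_subset : cantorSet ∩ Iio (2 / 3) ⊆ (fun z => 3 * z) ⁻¹' cantorSet :=
  fun z ⟨hz, hlt⟩ => by
    rcases mem_cantorSet_thirds hz with ⟨-, h⟩ | ⟨hge, -⟩
    · exact h
    · exact absurd hlt (not_lt.mpr hge)

theorem cantorSet_inter_Ioi_subset :
    cantorSet ∩ Ioi (1 / 3) ⊆ (fun z => 3 * z - 2) ⁻¹' cantorSet :=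
  fun z ⟨hz, hgt⟩ => by
    rcases mem_cantorSet_thirds hz with ⟨hle, -⟩ | ⟨-, h⟩
    · exact absurd hgt (not_lt.mpr hle)
    · exact h

theorem cantorSet_disjoint_Ioo : Disjoint cantorSet (Ioo (1 / 3) (2 / 3)) :=
  disjoint_left.mpr fun z hz ⟨h₁, h₂⟩ => by
    rcases mem_cantorSet_thirds hz with ⟨h, -⟩ | ⟨h, -⟩ <;> linarith

theorem hasPore_cantorSet_of_straddle {x r : ℝ} (hr : r < 5 / 6) (hl : x - r ≤ 1 / 3)
    (hu : 2 / 3 ≤ x + r) : HasPore (1 / 5) cantorSet x r := by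
  have hgap : ball (1 / 2 : ℝ) (1 / 5 * r) ⊆ Ioo (1 / 3) (2 / 3) := by
    rw [Real.ball_eq_Ioo]
    exact Ioo_subset_Ioo (by linarith) (by linarith)
  refine ⟨1 / 2, fun z hz => ?_, ?_⟩
  · obtain ⟨h₁, h₂⟩ := hgap hz
    rw [Real.ball_eq_Ioo] at hz
    rw [Real.closedBall_eq_Icc]
    constructor <;> linarith [hz.1, hz.2]
  · rw [inter_comm, ← disjoint_iff_inter_eq_empty]
    exact cantorSet_disjoint_Ioo.mono_right hgap

theorem hasPore_cantorSet_of_le_three_pow_mul (n : ℕ) :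
    ∀ x r : ℝ, 5 / 6 ≤ 3 ^ n * r → HasPore (1 / 5) cantorSet x r := by
  induction n with
  | zero =>
    intro x r hr
    exact hasPore_of_subset_unitInterval cantorSet_subset_unitInterval (by simpa using hr)
  | succ n ih =>
    intro x r hr
    have ih' : ∀ b, HasPore (1 / 5) cantorSet (3 * x + b) (3 * r) :=
      fun b => ih _ _ (by rw [pow_succ] at hr; linarith)
    rcases le_or_gt (5 / 6) r with hbig | hsmall
    · exact hasPore_of_subset_unitInterval cantorSet_subset_unitInterval hbig
    rcases lt_or_ge (x + r) (2 / 3) with hleft | hu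
    · have h := (ih' 0).preimage_mul_add three_pos
      simp only [add_zero] at h
      refine h.mono fun z ⟨hz, hzx⟩ => ?_
      refine cantorSet_inter_Iio_subset ⟨hz, ?_⟩
      rw [Real.closedBall_eq_Icc] at hzx
      exact lt_of_le_of_lt hzx.2 hleft
    rcases lt_or_ge (1 / 3) (x - r) with hright | hl
    · have h := (ih' (-2)).preimage_mul_add three_pos
      simp only [← sub_eq_add_neg] at h
      refine h.mono fun z ⟨hz, hzx⟩ => ?_
      refine cantorSet_inter_Ioi_subset ⟨hz, ?_⟩
      rw [Real.closedBall_eq_Icc] at hzx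
      exact lt_of_lt_of_le hright hzx.1
    exact hasPore_cantorSet_of_straddle hsmall hl hu

theorem hasPore_cantorSet (x : ℝ) {r : ℝ} (hr : 0 < r) : HasPore (1 / 5) cantorSet x r := by
  obtain ⟨n, hn⟩ := pow_unbounded_of_one_lt (5 / 6 / r) (by norm_num : (1 : ℝ) < 3)
  exact hasPore_cantorSet_of_le_three_pow_mul n x r ((div_lt_iff₀ hr).mp hn).le

/-- **Theorem.** The middle-thirds Cantor set is uniformly `1/5`-porous; in fact for every
closed interval `B(x,r) ⊆ ℝ` with `r > 0` there is `y` such that the open interval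
`B°(y, r/5)` is contained in `B(x,r)` and disjoint from the Cantor set. -/
theorem cantorSet_uniformly_one_fifth_porous :
    (∀ (x r : ℝ), 0 < r →
      ∃ y : ℝ, Metric.ball y (r / 5) ⊆ Metric.closedBall x r ∧
        Metric.ball y (r / 5) ∩ cantorSet = ∅) ∧
    UniformlyPorous (1 / 5) cantorSet := by
  refine ⟨fun x r hr => ?_, 1, one_pos, fun x r hr _ => hasPore_cantorSet x hr⟩
  simpa only [HasPore, one_div_mul_eq_div] using hasPore_cantorSet x hr
end

section
/- Let (X,d) be a metric space that is Ahlfors δ-regular, and let K ⊂ X be a closed Ahlfors s-regular set with s < δ. Then K is uniformly porous, i.e., there exists β ∈ (0,1) such that K is uniformly β-porous. -/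
open MeasureTheory

/-!
If a ball `B(x,r)` contains no open ball of radius `βr` missing `K`, then every point of
`B(x,r/2)` lies within `βr` of `K`. A maximal `βr`-separated subset `T` of `K ∩ B(x,r)` is then a
`βr`-net of it, so the balls of radius `2βr` around `T` cover `B(x,r/2)` and the `δ`-regularity of
`X` gives `#T ≳ β^(-δ)`. The balls of radius `βr/2` around `T` are disjoint and lie in a ball of
radius `2r` centred on `K`, so the `s`-regularity of `K` gives `#T ≲ β^(-s)`. As `s < δ`, the two
bounds are incompatible once `β` is small.
-/

/-- A closed set `K` in a metric space `X` is Ahlfors `s`-regular if there are a Borel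
measure `μ` supported exactly on `K` (i.e. `μ(X \ K) = 0`, and every ball centred in `K`
has positive measure, which follows from the lower bound below) and a constant `C > 0`
with `C⁻¹ rˢ ≤ μ(B(x,r)) ≤ C rˢ` for all `x ∈ K` and `0 < r ≤ 1`. -/
def IsAhlforsRegularSet {X : Type*} [MetricSpace X] [MeasurableSpace X]
    (s : ℝ) (K : Set X) : Prop :=
  ∃ (μ : Measure X) (C : ℝ), 0 < C ∧ μ Kᶜ = 0 ∧
    ∀ x ∈ K, ∀ r : ℝ, 0 < r → r ≤ 1 →
      ENNReal.ofReal (C⁻¹ * r ^ s) ≤ μ (Metric.closedBall x r) ∧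
        μ (Metric.closedBall x r) ≤ ENNReal.ofReal (C * r ^ s)

open Metric Set Filter
open scoped ENNReal NNReal

section Measure

variable {α ι : Type*} [MeasurableSpace α] {μ : Measure α} {T : Set ι} {f : ι → Set α}

theorem Set.PairwiseDisjoint.encard_mul_le_measure_biUnion (hd : T.PairwiseDisjoint f)
    (hm : ∀ i ∈ T, MeasurableSet (f i)) {a : ℝ≥0∞} (ha : ∀ i ∈ T, a ≤ μ (f i)) :
    T.encard * a ≤ μ (⋃ i ∈ T, f i) :=
  calc T.encard * a = ∑' _ : T, a := (ENNReal.tsum_set_const T a).symm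
    _ ≤ ∑' i : T, μ (f i) := ENNReal.tsum_le_tsum fun i ↦ ha i i.2
    _ ≤ μ (⋃ i : T, f i) := tsum_meas_le_meas_iUnion_of_disjoint μ (fun i ↦ hm i i.2)
          fun i j hij ↦ hd i.2 j.2 (Subtype.coe_ne_coe.2 hij)
    _ = μ (⋃ i ∈ T, f i) := by rw [biUnion_eq_iUnion]

theorem measure_le_encard_mul_of_subset_biUnion (hT : T.Countable) {A : Set α}
    (hA : A ⊆ ⋃ i ∈ T, f i) {b : ℝ≥0∞} (hb : ∀ i ∈ T, μ (f i) ≤ b) :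
    μ A ≤ T.encard * b :=
  calc μ A ≤ μ (⋃ i ∈ T, f i) := measure_mono hA
    _ ≤ ∑' i : T, μ (f i) := measure_biUnion_le μ hT f
    _ ≤ ∑' _ : T, b := ENNReal.tsum_le_tsum fun i ↦ hb i i.2
    _ = T.encard * b := ENNReal.tsum_set_const T b

end Measure

section MetricSpace

variable {X : Type*} [MetricSpace X]

theorem Metric.exists_maximal_isSeparated (ε : ℝ≥0∞) (S : Set X) :
    ∃ T, Maximal (fun T ↦ T ⊆ S ∧ IsSeparated ε T) T :=
  zorn_subset _ fun c hc hchain ↦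
    ⟨⋃₀ c, ⟨sUnion_subset fun _ hT ↦ (hc hT).1, hchain.pairwise_sUnion.2 fun _ hT ↦ (hc hT).2⟩,
      fun _ ↦ subset_sUnion_of_mem⟩

theorem Metric.IsSeparated.pairwiseDisjoint_closedBall {ε : ℝ≥0} {T : Set X}
    (hT : IsSeparated ε T) : T.PairwiseDisjoint fun t ↦ closedBall t (ε / 2) := by
  intro a ha b hb hab
  refine Set.disjoint_left.2 fun z hza hzb ↦ (hT ha hb hab).not_ge ?_
  simp only [mem_closedBall] at hza hzb
  rw [edist_dist, ← ENNReal.ofReal_coe_nnreal]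
  refine ENNReal.ofReal_le_ofReal ?_
  linarith [dist_triangle_right a b z, dist_comm z a, dist_comm z b]

theorem Metric.closedBall_subset_thickening_of_forall_ball_inter_nonempty {K : Set X} {x : X}
    {ε r : ℝ} (hεr : ε ≤ r / 2)
    (hx : ∀ y, ball y ε ⊆ closedBall x r → (ball y ε ∩ K).Nonempty) :
    closedBall x (r / 2) ⊆ thickening ε K := by
  intro z hz
  obtain ⟨k, hkz, hkK⟩ := hx z fun w hw ↦ by
    rw [mem_closedBall] at hz ⊢
    linarith [dist_triangle w z x, mem_ball.1 hw]
  exact mem_thickening_iff.2 ⟨k, hkK, mem_ball'.1 hkz⟩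

end MetricSpace

section Ahlfors

variable {X : Type*} [MetricSpace X] [MeasurableSpace X]

def AhlforsBounds (μ : Measure X) (s C : ℝ) (K : Set X) : Prop :=
  ∀ x ∈ K, ∀ r : ℝ, 0 < r → r ≤ 1 →
    ENNReal.ofReal (C⁻¹ * r ^ s) ≤ μ (closedBall x r) ∧
      μ (closedBall x r) ≤ ENNReal.ofReal (C * r ^ s)

variable {μ : Measure X} {s C : ℝ} {K T : Set X} {ρ R : ℝ}

theorem AhlforsBounds.finite_and_ncard_le [OpensMeasurableSpace X] (h : AhlforsBounds μ s C K)
    (hC : 0 < C) (hTK : T ⊆ K) (hd : T.PairwiseDisjoint (closedBall · ρ)) {z : X} (hz : z ∈ K)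
    (hsub : ∀ t ∈ T, closedBall t ρ ⊆ closedBall z R) (hρ : 0 < ρ) (hρR : ρ ≤ R) (hR : R ≤ 1) :
    T.Finite ∧ (T.ncard : ℝ) ≤ C ^ 2 * (R / ρ) ^ s := by
  have hR0 : 0 < R := hρ.trans_le hρR
  have hbound : T.encard * ENNReal.ofReal (C⁻¹ * ρ ^ s) ≤ ENNReal.ofReal (C * R ^ s) :=
    calc _ ≤ μ (⋃ t ∈ T, closedBall t ρ) :=
          hd.encard_mul_le_measure_biUnion (fun _ _ ↦ measurableSet_closedBall)
            fun t ht ↦ (h t (hTK ht) ρ hρ (hρR.trans hR)).1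
      _ ≤ μ (closedBall z R) := measure_mono (iUnion₂_subset hsub)
      _ ≤ _ := (h z hz R hR0 hR).2
  have hfin : T.Finite := by
    rw [← encard_lt_top_iff, lt_top_iff_ne_top]
    intro htop
    rw [htop, ENat.toENNReal_top, ENNReal.top_mul (ENNReal.ofReal_pos.2 (by positivity)).ne',
      top_le_iff] at hbound
    exact ENNReal.ofReal_ne_top hbound
  refine ⟨hfin, ?_⟩
  rw [← hfin.cast_ncard_eq, ENat.toENNReal_coe, ← ENNReal.ofReal_natCast,
    ← ENNReal.ofReal_mul (Nat.cast_nonneg _),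
    ENNReal.ofReal_le_ofReal_iff (by positivity)] at hbound
  calc (T.ncard : ℝ) ≤ C * R ^ s / (C⁻¹ * ρ ^ s) := (le_div_iff₀ (by positivity)).2 hbound
    _ = C ^ 2 * (R / ρ) ^ s := by
      rw [Real.div_rpow hR0.le hρ.le]
      field_simp

theorem AhlforsBounds.rpow_le_mul_ncard (h : AhlforsBounds μ s C K) (hC : 0 < C) (hT : T.Finite)
    (hTK : T ⊆ K) {x : X} (hx : x ∈ K) (hcov : closedBall x R ⊆ ⋃ t ∈ T, closedBall t ρ)
    (hR : 0 < R) (hR1 : R ≤ 1) (hρ : 0 < ρ) (hρ1 : ρ ≤ 1) :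
    (R / ρ) ^ s ≤ C ^ 2 * T.ncard := by
  have hbound : ENNReal.ofReal (C⁻¹ * R ^ s) ≤ T.encard * ENNReal.ofReal (C * ρ ^ s) :=
    (h x hx R hR hR1).1.trans <| measure_le_encard_mul_of_subset_biUnion hT.countable hcov
      fun t ht ↦ (h t (hTK ht) ρ hρ hρ1).2
  rw [← hT.cast_ncard_eq, ENat.toENNReal_coe, ← ENNReal.ofReal_natCast,
    ← ENNReal.ofReal_mul (Nat.cast_nonneg _),
    ENNReal.ofReal_le_ofReal_iff (by positivity)] at hbound
  calc (R / ρ) ^ s = C * (C⁻¹ * R ^ s) / ρ ^ s := by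
        rw [Real.div_rpow hR.le hρ.le]
        field_simp
    _ ≤ C * (T.ncard * (C * ρ ^ s)) / ρ ^ s := by gcongr
    _ = C ^ 2 * T.ncard := by field_simp

theorem rpow_le_of_forall_ball_inter_nonempty [OpensMeasurableSpace X] {ν : Measure X}
    {δ Cν Cμ β r : ℝ} (hν : AhlforsBounds ν δ Cν univ) (hCν : 0 < Cν)
    (hμ : AhlforsBounds μ s Cμ K) (hCμ : 0 < Cμ) (hβ : 0 < β) (hβ2 : β ≤ 1 / 2) (hr : 0 < r)
    (hr2 : r ≤ 1 / 2) {x : X}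
    (hx : ∀ y, ball y (β * r) ⊆ closedBall x r → (ball y (β * r) ∩ K).Nonempty) :
    (4⁻¹ * β⁻¹) ^ δ ≤ Cν ^ 2 * Cμ ^ 2 * (4 * β⁻¹) ^ s := by
  obtain ⟨ε, hε⟩ : ∃ ε : ℝ≥0, (ε : ℝ) = β * r := ⟨⟨β * r, by positivity⟩, rfl⟩
  rw [← hε] at hx
  have hε0 : 0 < (ε : ℝ) := by rw [hε]; positivity
  have hεr : (ε : ℝ) ≤ r / 2 := by rw [hε]; nlinarith
  have near : ∀ z ∈ closedBall x (r / 2), ∃ k ∈ K, dist z k < ε := fun z hz ↦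
    mem_thickening_iff.1 (closedBall_subset_thickening_of_forall_ball_inter_nonempty hεr hx hz)
  obtain ⟨T, hT⟩ := exists_maximal_isSeparated (ε : ℝ≥0∞) (K ∩ closedBall x r)
  have hTK : T ⊆ K := hT.prop.1.trans inter_subset_left
  have hTx : ∀ t ∈ T, dist t x ≤ r := fun t ht ↦ (hT.prop.1 ht).2
  have hTnet := (IsCover.of_maximal_isSeparated hT).subset_iUnion_closedBall
  obtain ⟨y₀, hy₀K, hy₀⟩ := near x (mem_closedBall_self (by positivity))
  obtain ⟨hTfin, hpack⟩ := hμ.finite_and_ncard_le hCμ hTK hT.prop.2.pairwiseDisjoint_closedBall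
    hy₀K (R := 2 * r) (fun t ht w hw ↦ by
      rw [mem_closedBall] at hw ⊢
      linarith [dist_triangle4 w t x y₀, hTx t ht]) (by positivity) (by linarith) (by linarith)
  have hcov := hν.rpow_le_mul_ncard hCν hTfin (subset_univ T) (mem_univ x) (R := r / 2)
    (ρ := 2 * ε) (fun z hz ↦ by
      obtain ⟨k, hkK, hzk⟩ := near z hz
      have hkx : dist k x ≤ r := by
        linarith [dist_triangle_left k x z, mem_closedBall.1 hz]
      obtain ⟨t, ht, hkt⟩ := mem_iUnion₂.1 (hTnet ⟨hkK, hkx⟩)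
      exact mem_iUnion₂.2 ⟨t, ht, mem_closedBall.2 <| by
        linarith [dist_triangle z k t, mem_closedBall.1 hkt]⟩)
    (by positivity) (by linarith) (by positivity) (by linarith)
  calc (4⁻¹ * β⁻¹) ^ δ = (r / 2 / (2 * ε)) ^ δ := by
        rw [hε]
        congr 1
        field_simp
        ring
    _ ≤ Cν ^ 2 * T.ncard := hcov
    _ ≤ Cν ^ 2 * (Cμ ^ 2 * (2 * r / (ε / 2)) ^ s) := by gcongr
    _ = Cν ^ 2 * Cμ ^ 2 * (4 * β⁻¹) ^ s := by
        rw [hε, mul_assoc]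
        congr 3
        field_simp
        ring

end Ahlfors

theorem eventually_mul_rpow_lt_rpow {s δ : ℝ} (hsδ : s < δ) (b : ℝ) {c d : ℝ} (hc : 0 < c)
    (hd : 0 < d) : ∀ᶠ u in atTop, b * (c * u) ^ s < (d * u) ^ δ := by
  filter_upwards [eventually_gt_atTop 0,
    (tendsto_rpow_atTop (sub_pos.2 hsδ)).eventually_gt_atTop (b * c ^ s / d ^ δ)] with u hu hlarge
  have hsplit : u ^ δ = u ^ (δ - s) * u ^ s := by rw [← Real.rpow_add hu, sub_add_cancel]
  rw [Real.mul_rpow hc.le hu.le, Real.mul_rpow hd.le hu.le, hsplit]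
  calc b * (c ^ s * u ^ s) = b * c ^ s / d ^ δ * d ^ δ * u ^ s := by field_simp
    _ < u ^ (δ - s) * d ^ δ * u ^ s := by gcongr
    _ = d ^ δ * (u ^ (δ - s) * u ^ s) := by ring

theorem uniformly_porous_of_ahlfors_regular_general
    {X : Type*} [MetricSpace X] [MeasurableSpace X] [BorelSpace X]
    (δ s : ℝ) (hsδ : s < δ)
    (hX : IsAhlforsRegularSet δ (Set.univ : Set X))
    (K : Set X) (hK : IsAhlforsRegularSet s K) :
    ∃ β ∈ Set.Ioo (0 : ℝ) 1, UniformlyPorous β K := by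
  obtain ⟨ν, Cν, hCν, -, hν⟩ := hX
  obtain ⟨μ, Cμ, hCμ, -, hμ⟩ := hK
  obtain ⟨u, hu2, hu⟩ := ((eventually_ge_atTop 2).and (eventually_mul_rpow_lt_rpow hsδ
    (Cν ^ 2 * Cμ ^ 2) four_pos (inv_pos.2 four_pos))).exists
  have hβ : u⁻¹ ≤ 1 / 2 := by rw [one_div]; exact inv_anti₀ two_pos hu2
  refine ⟨u⁻¹, ⟨by positivity, by linarith⟩, 1 / 2, one_half_pos, fun x r hr hr2 ↦ ?_⟩
  by_contra! hhole
  have hbound := rpow_le_of_forall_ball_inter_nonempty hν hCν hμ hCμ (by positivity) hβ hr hr2 hhole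
  rw [inv_inv] at hbound
  linarith

/-- **Theorem.** Let `X` be an Ahlfors `δ`-regular metric space and let `K ⊆ X` be a
closed Ahlfors `s`-regular subset with `0 ≤ s < δ`.  Then `K` is uniformly porous, i.e.
there exists `β ∈ (0,1)` such that `K` is uniformly `β`-porous. -/
theorem uniformly_porous_of_ahlfors_regular
    {X : Type*} [MetricSpace X] [MeasurableSpace X] [BorelSpace X]
    (δ s : ℝ) (hs : 0 ≤ s) (hsδ : s < δ)
    (hX : IsAhlforsRegularSet δ (Set.univ : Set X))
    (K : Set X) (hKcl : IsClosed K) (hK : IsAhlforsRegularSet s K) :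
    ∃ β ∈ Set.Ioo (0 : ℝ) 1, UniformlyPorous β K :=
  uniformly_porous_of_ahlfors_regular_general δ s hsδ hX K hK
end

section
/- Let (X,d) be a separable complete metric space and β ∈ (0,1). If (Tₙ)ₙ is a countable family of Borel β-BMS winning subsets of X, then ⋂ₙ Tₙ is β-BMS winning. -/
/-!
Alice plays all the games at once: Bob's moves are distributed among countably many virtual
games through `Nat.pair`, and in the `k`-th one Alice follows her winning strategy for `T k`.
Each virtual game is a legal play, since Bob's moves in it are nested inside Alice's earlier
answers there, so its balls meet `T k`. Its balls form a cofinal subsequence of the nested real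
balls, hence have the same intersection, and that intersection is a single point because the radii
shrink at least by the factor `β` at each round. This point lies in every `T k`.
-/

/-- The partial order on formal balls: `(x₂,r₂) ≤ₛ (x₁,r₁)` iff `r₂ + d(x₁,x₂) ≤ r₁`. -/
def SLeq {X : Type*} [MetricSpace X] (w₂ w₁ : X × ℝ) : Prop :=
  w₂.2 + dist w₁.1 w₂.1 ≤ w₁.2

/-- Legality of Alice's `n`-th move in the `β`-BMS game: `ω'ₙ ≤ₛ ωₙ` and `r'ₙ = β rₙ`. -/
def BMSAliceLegal {X : Type*} [MetricSpace X] (β : ℝ) (bob alice : ℕ → X × ℝ) (n : ℕ) :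
    Prop :=
  SLeq (alice n) (bob n) ∧ (alice n).2 = β * (bob n).2

/-- Legality of Bob's `n`-th move in the BMS game: his radius is positive, and if
`n = m + 1` then `ωₙ ≤ₛ ω'ₘ`.  No further restriction is put on his radii. -/
def BMSBobLegal {X : Type*} [MetricSpace X] (bob alice : ℕ → X × ℝ) (n : ℕ) : Prop :=
  0 < (bob n).2 ∧ ∀ m, n = m + 1 → SLeq (bob n) (alice m)

/-- `T` is `β`-BMS winning: Alice has a winning strategy (a function of the history of
Bob's moves). -/
def BMSWinning {X : Type*} [MetricSpace X] (β : ℝ) (T : Set X) : Prop :=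
  ∃ σ : List (X × ℝ) → X × ℝ,
    ∀ bob : ℕ → X × ℝ,
      (∀ n, (∀ m ≤ n, BMSBobLegal bob (fun k => σ ((List.range (k + 1)).map bob)) m) →
        BMSAliceLegal β bob (fun k => σ ((List.range (k + 1)).map bob)) n) ∧
      ((∀ n, BMSBobLegal bob (fun k => σ ((List.range (k + 1)).map bob)) n) →
        ((⋂ n, Metric.closedBall (bob n).1 (bob n).2) ∩ T).Nonempty)

open Metric Filter Topology

theorem strictMono_pair_right (k : ℕ) : StrictMono (Nat.pair k) :=
  fun _ _ h => Nat.pair_lt_pair_right k h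

section Strategy

variable {α : Type*}

def replies (σ : List α → α) (bob : ℕ → α) (n : ℕ) : α :=
  σ ((List.range (n + 1)).map bob)

/-- Bob's move at time `Nat.pair k j` is his `j`-th move in the `k`-th virtual game, and Alice
answers it with `σ k`. The default of `getD` is never read on actual histories. -/
def interleave (σ : ℕ → List α → α) (L : List α) : α :=
  σ (L.length - 1).unpair.1 ((List.range ((L.length - 1).unpair.2 + 1)).map
    fun j => L.getD (Nat.pair (L.length - 1).unpair.1 j) (σ 0 []))

theorem replies_interleave_pair {σ : ℕ → List α → α} {bob : ℕ → α} (k j : ℕ) :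
    replies (interleave σ) bob (Nat.pair k j) = replies (σ k) (bob ∘ Nat.pair k) j := by
  have hlen : ((List.range (Nat.pair k j + 1)).map bob).length - 1 = Nat.pair k j := by simp
  simp only [replies, interleave, hlen, Nat.unpair_pair]
  congr 1
  refine List.map_congr_left fun m hm => ?_
  have hm : Nat.pair k m < Nat.pair k j + 1 := Nat.lt_succ_of_le <|
    (strictMono_pair_right k).monotone (Nat.lt_succ_iff.1 (List.mem_range.1 hm))
  simp [List.getElem?_range hm]

end Strategy

section FormalBalls

variable {X : Type*} [MetricSpace X]

namespace SLeq

theorem refl (w : X × ℝ) : SLeq w w := by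
  simp [SLeq]

theorem trans {w₁ w₂ w₃ : X × ℝ} (h₃₂ : SLeq w₃ w₂) (h₂₁ : SLeq w₂ w₁) : SLeq w₃ w₁ := by
  unfold SLeq at *
  linarith [dist_triangle w₁.1 w₂.1 w₃.1]

theorem closedBall_subset {w₁ w₂ : X × ℝ} (h : SLeq w₂ w₁) :
    closedBall w₂.1 w₂.2 ⊆ closedBall w₁.1 w₁.2 :=
  closedBall_subset_closedBall' (by rw [dist_comm]; exact h)

end SLeq

theorem sLeq_of_le_of_sLeq_succ {w : ℕ → X × ℝ} {N : ℕ}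
    (h : ∀ n < N, SLeq (w (n + 1)) (w n)) {m n : ℕ} (hmn : m ≤ n) (hn : n ≤ N) :
    SLeq (w n) (w m) := by
  induction n, hmn using Nat.le_induction with
  | base => exact SLeq.refl _
  | succ n _ ih => exact (h n (by omega)).trans (ih (by omega))

theorem iInter_closedBall_comp_subset {w : ℕ → X × ℝ} (h : ∀ n, SLeq (w (n + 1)) (w n))
    {f : ℕ → ℕ} (hf : ∀ n, n ≤ f n) :
    ⋂ j, closedBall (w (f j)).1 (w (f j)).2 ⊆ ⋂ n, closedBall (w n).1 (w n).2 :=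
  Set.subset_iInter fun n => (Set.iInter_subset _ n).trans
    (sLeq_of_le_of_sLeq_succ (fun m _ => h m) (hf n) le_rfl).closedBall_subset

theorem iInter_closedBall_subsingleton {c : ℕ → X} {r : ℕ → ℝ} (hr : Tendsto r atTop (𝓝 0)) :
    (⋂ n, closedBall (c n) (r n)).Subsingleton := by
  intro x hx y hy
  have hxy : ∀ n, dist x y ≤ 2 * r n := fun n => by
    have hxn := Set.mem_iInter.1 hx n
    have hyn := Set.mem_iInter.1 hy n
    rw [mem_closedBall] at hxn hyn
    linarith [dist_triangle_right x y (c n)]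
  have h2r : Tendsto (fun n => 2 * r n) atTop (𝓝 0) := by simpa using hr.const_mul 2
  exact dist_le_zero.1 (ge_of_tendsto' h2r hxy)

section Play

variable {β : ℝ} {bob alice : ℕ → X × ℝ}

theorem sLeq_succ_of_legal {n : ℕ} (hB : BMSBobLegal bob alice (n + 1))
    (hA : BMSAliceLegal β bob alice n) : SLeq (bob (n + 1)) (bob n) :=
  (hB.2 n rfl).trans hA.1

theorem sLeq_alice_of_legal {N : ℕ} (hB : ∀ m ≤ N, BMSBobLegal bob alice m)
    (hA : ∀ m < N, BMSAliceLegal β bob alice m) {t t' : ℕ} (htt' : t < t') (ht' : t' ≤ N) :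
    SLeq (bob t') (alice t) :=
  (sLeq_of_le_of_sLeq_succ (fun n hn => sLeq_succ_of_legal (hB (n + 1) hn) (hA n hn))
    htt' ht').trans ((hB (t + 1) (by omega)).2 t rfl)

theorem radius_le_of_legal (hβ : 0 ≤ β) (hB : ∀ n, BMSBobLegal bob alice n)
    (hA : ∀ n, BMSAliceLegal β bob alice n) (n : ℕ) : (bob n).2 ≤ (bob 0).2 * β ^ n := by
  induction n with
  | zero => simp
  | succ n ih =>
    have hstep : (bob (n + 1)).2 ≤ β * (bob n).2 := by
      have h := (hB (n + 1)).2 n rfl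
      unfold SLeq at h
      linarith [(hA n).2, dist_nonneg (x := (alice n).1) (y := (bob (n + 1)).1)]
    calc (bob (n + 1)).2 ≤ β * (bob n).2 := hstep
      _ ≤ β * ((bob 0).2 * β ^ n) := mul_le_mul_of_nonneg_left ih hβ
      _ = (bob 0).2 * β ^ (n + 1) := by ring

theorem tendsto_radius_of_legal (hβ₀ : 0 ≤ β) (hβ₁ : β < 1) (hB : ∀ n, BMSBobLegal bob alice n)
    (hA : ∀ n, BMSAliceLegal β bob alice n) : Tendsto (fun n => (bob n).2) atTop (𝓝 0) := by
  have hgeom : Tendsto (fun n => (bob 0).2 * β ^ n) atTop (𝓝 0) := by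
    simpa using (tendsto_pow_atTop_nhds_zero_of_lt_one hβ₀ hβ₁).const_mul (bob 0).2
  exact squeeze_zero (fun n => (hB n).1.le) (radius_le_of_legal hβ₀ hB hA) hgeom

end Play

theorem bmsWinning_iff {β : ℝ} {T : Set X} :
    BMSWinning β T ↔ ∃ σ : List (X × ℝ) → X × ℝ, ∀ bob : ℕ → X × ℝ,
      (∀ n, (∀ m ≤ n, BMSBobLegal bob (replies σ bob) m) →
        BMSAliceLegal β bob (replies σ bob) n) ∧
      ((∀ n, BMSBobLegal bob (replies σ bob) n) →
        ((⋂ n, closedBall (bob n).1 (bob n).2) ∩ T).Nonempty) :=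
  Iff.rfl

section Interleave

variable {σ : ℕ → List (X × ℝ) → X × ℝ} {bob : ℕ → X × ℝ} {β : ℝ}

theorem bobLegal_subgame {k j : ℕ}
    (hB : ∀ m ≤ Nat.pair k j, BMSBobLegal bob (replies (interleave σ) bob) m)
    (hA : ∀ m < Nat.pair k j, BMSAliceLegal β bob (replies (interleave σ) bob) m) :
    BMSBobLegal (bob ∘ Nat.pair k) (replies (σ k) (bob ∘ Nat.pair k)) j := by
  refine ⟨(hB _ le_rfl).1, fun m hjm => ?_⟩
  subst hjm
  rw [← replies_interleave_pair]
  exact sLeq_alice_of_legal hB hA (Nat.pair_lt_pair_right k m.lt_succ_self) le_rfl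

theorem aliceLegal_interleave
    (hσ : ∀ k (bob : ℕ → X × ℝ) n, (∀ m ≤ n, BMSBobLegal bob (replies (σ k) bob) m) →
      BMSAliceLegal β bob (replies (σ k) bob) n)
    (n : ℕ) (hB : ∀ m ≤ n, BMSBobLegal bob (replies (interleave σ) bob) m) :
    BMSAliceLegal β bob (replies (interleave σ) bob) n := by
  induction n using Nat.strong_induction_on with
  | _ n ih =>
    have hA : ∀ m < n, BMSAliceLegal β bob (replies (interleave σ) bob) m :=
      fun m hm => ih m hm fun l hl => hB l (hl.trans hm.le)
    obtain ⟨k, i, rfl⟩ : ∃ k i, Nat.pair k i = n := ⟨_, _, Nat.pair_unpair n⟩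
    have hsub := hσ k (bob ∘ Nat.pair k) i fun j hj =>
      have hji : Nat.pair k j ≤ Nat.pair k i := (strictMono_pair_right k).monotone hj
      bobLegal_subgame (fun m hm => hB m (hm.trans hji)) (fun m hm => hA m (hm.trans_le hji))
    rwa [BMSAliceLegal, ← replies_interleave_pair] at hsub

end Interleave

end FormalBalls

theorem bms_winning_iInter_general
    {X : Type*} [MetricSpace X]
    (β : ℝ) (hβ : β ∈ Set.Ioo (0 : ℝ) 1) (T : ℕ → Set X)
    (hTwin : ∀ n, BMSWinning β (T n)) :
    BMSWinning β (⋂ n, T n) := by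
  choose σ hσ using fun n => bmsWinning_iff.1 (hTwin n)
  have hAlice bob := aliceLegal_interleave (bob := bob) fun k bob => (hσ k bob).1
  refine bmsWinning_iff.2 ⟨interleave σ, fun bob => ⟨hAlice bob, fun hB => ?_⟩⟩
  have hA n := hAlice bob n fun m _ => hB m
  have hnested n := sLeq_succ_of_legal (hB (n + 1)) (hA n)
  have hgame k : ((⋂ n, closedBall (bob n).1 (bob n).2) ∩ T k).Nonempty := by
    obtain ⟨y, hyballs, hyT⟩ := (hσ k (bob ∘ Nat.pair k)).2 fun j =>
      bobLegal_subgame (fun m _ => hB m) (fun m _ => hA m)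
    exact ⟨y, iInter_closedBall_comp_subset hnested (Nat.right_le_pair k) hyballs, hyT⟩
  choose y hyballs hyT using hgame
  have hsingle : (⋂ n, closedBall (bob n).1 (bob n).2).Subsingleton :=
    iInter_closedBall_subsingleton (tendsto_radius_of_legal hβ.1.le hβ.2 hB hA)
  have hy k : y k = y 0 := hsingle (hyballs k) (hyballs 0)
  exact ⟨y 0, hyballs 0, Set.mem_iInter.2 fun k => hy k ▸ hyT k⟩

/-- **Theorem.** Let `X` be a separable complete metric space and `β ∈ (0,1)`.  If
`(Tₙ)ₙ` is a countable family of Borel `β`-BMS winning subsets of `X`, then `⋂ₙ Tₙ` is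
`β`-BMS winning. -/
theorem bms_winning_iInter
    {X : Type*} [MetricSpace X] [CompleteSpace X] [TopologicalSpace.SeparableSpace X]
    [MeasurableSpace X] [BorelSpace X]
    (β : ℝ) (hβ : β ∈ Set.Ioo (0 : ℝ) 1) (T : ℕ → Set X)
    (hTmeas : ∀ n, MeasurableSet (T n)) (hTwin : ∀ n, BMSWinning β (T n)) :
    BMSWinning β (⋂ n, T n) :=
  bms_winning_iInter_general β hβ T hTwin
end
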